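/- Let $d=2m+1\ge 5$, $n\ge k\ge d$, and define $h_i = \binom{k-d+i}{i}+(n-k)\binom{k-d+i-1}{i-1}$ for $0\le i\le m$ and $h_i = h_{d-i}$ for $m< i\le d$. Then the sequence $(h_0,\ldots,h_d)$ is symmetric ($h_i=h_{d-i}$), satisfies $h_0=1$, $h_1 = n-d+1$, and is unimodal: $h_0\le h_1\le\cdots\le h_m$. -/

import Mathlib

/-!
Writing `c = k - d ≥ 0` and `F j = C(c + j, j)`, which vanishes for `j < 0`, the lower half of the
`h`-vector is `h_i = F i + (n - k) F (i - 1)`. Since `C(c + j + 1, j + 1) = C(c + j, j) + C(c + j, j + 1)`,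
`F` is monotone on `ℤ`, and hence so is `h` up to the middle because `n - k ≥ 0`.
-/

/-- Integer binomial coefficient, zero outside the range `0 ≤ b ≤ a`. -/
def ch (a b : ℤ) : ℤ := if 0 ≤ b ∧ b ≤ a then ((a.toNat).choose b.toNat : ℤ) else 0

lemma ch_nonneg (a b : ℤ) : 0 ≤ ch a b := by
  unfold ch
  split_ifs <;> positivity

lemma ch_of_neg (a : ℤ) {b : ℤ} (hb : b < 0) : ch a b = 0 :=
  if_neg fun h => hb.not_ge h.1

lemma ch_natCast (a b : ℕ) : ch a b = a.choose b := by
  unfold ch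
  split_ifs with hab
  · simp
  · rw [Nat.choose_eq_zero_of_lt (by omega), Nat.cast_zero]

lemma ch_zero_right {a : ℤ} (ha : 0 ≤ a) : ch a 0 = 1 := by
  lift a to ℕ using ha
  simpa using ch_natCast a 0

lemma ch_one_right {a : ℤ} (ha : 0 ≤ a) : ch a 1 = a := by
  lift a to ℕ using ha
  simpa using ch_natCast a 1

lemma ch_add_self_monotone {c : ℤ} (hc : 0 ≤ c) : Monotone fun j => ch (c + j) j := by
  refine monotone_int_of_le_succ fun j => ?_
  rcases lt_or_ge j 0 with hj | hj
  · rw [ch_of_neg _ hj]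
    exact ch_nonneg _ _
  · lift c to ℕ using hc
    lift j to ℕ using hj
    rw [← Nat.cast_add, ← Nat.cast_add_one, show (c : ℤ) + (j + 1 : ℕ) = (c + j + 1 : ℕ) by
      push_cast; ring, ch_natCast, ch_natCast, Nat.choose_succ_succ, Nat.cast_add]
    exact le_add_of_nonneg_right (Nat.cast_nonneg _)

/-- The toric `h`-vector of the ordinary polytope `P^{d,k,n}`, `d = 2m+1 ≥ 5`,
`d ≤ k ≤ n`: with `h_i = C(k-d+i,i) + (n-k)C(k-d+i-1,i-1)` for `i ≤ m` and
`h_i = h_{d-i}` for `i > m`, the sequence is symmetric, has `h_0 = 1`,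
`h_1 = n-d+1`, and is unimodal up to the middle. -/
theorem ordinary_h_vector_properties (d m k n : ℕ) (hd : d = 2 * m + 1) (hd5 : 5 ≤ d)
    (hk : d ≤ k) (hn : k ≤ n) (h : ℕ → ℤ)
    (hdef : ∀ i ≤ m,
      h i = ch ((k : ℤ) - d + i) (i : ℤ) + ((n : ℤ) - k) * ch ((k : ℤ) - d + i - 1) ((i : ℤ) - 1))
    (hsym : ∀ i, m < i → i ≤ d → h i = h (d - i)) :
    (∀ i ≤ d, h i = h (d - i)) ∧ h 0 = 1 ∧ h 1 = (n : ℤ) - d + 1 ∧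
      (∀ i, 1 ≤ i → i ≤ m → h (i - 1) ≤ h i) := by
  set c : ℤ := (k : ℤ) - d
  set F : ℤ → ℤ := fun j => ch (c + j) j
  have hc : 0 ≤ c := by omega
  have hF : ∀ i ≤ m, h i = F i + ((n : ℤ) - k) * F (i - 1) := fun i hi => by
    rw [hdef i hi, add_sub_assoc]
  have h0 : h 0 = 1 := by
    rw [hF 0 (Nat.zero_le m)]
    simp [F, ch_zero_right hc, ch_of_neg]
  refine ⟨fun i hi => ?_, h0, ?_, fun i hi1 him => ?_⟩
  · rcases lt_or_ge m i with hmi | him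
    · exact hsym i hmi hi
    · have := hsym (d - i) (by omega) (by omega)
      rwa [Nat.sub_sub_self hi, eq_comm] at this
  · rw [hF 1 (by omega)]
    simp only [F, Nat.cast_one, sub_self, add_zero, ch_one_right (by omega : 0 ≤ c + 1),
      ch_zero_right hc]
    ring
  · have hmono := ch_add_self_monotone hc
    rw [hF i him, hF (i - 1) (by omega), Nat.cast_sub hi1, Nat.cast_one]
    have hnk : (0 : ℤ) ≤ (n : ℤ) - k := by omega
    gcongr <;> apply hmono <;> omega
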